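/- arXiv:2505.23665 — 11 statements merged into one kernel-verified Lean document; each statement's English description precedes it below -/
import Mathlib

section
/- Let n ∈ ℕ and let X, Y be Hausdorff topological spaces. Suppose f : X → Y and g : Y → X are continuous maps such that g ∘ f is homotopic to the identity of X and f ∘ g is homotopic to the identity of Y. Then f maps every π_n-wild point of X to a π_n-wild point of Y, g maps every π_n-wild point of Y to a π_n-wild point of X, and the restrictions f| : w_n(X) → w_n(Y) and g| : w_n(Y) → w_n(X) (between the wild sets with their subspace topologies) satisfy: g| ∘ f| is homotopic to the identity of w_n(X) and f| ∘ g| is homotopic to the identity of w_n(Y). In particular, w_n(X) and w_n(Y) are homotopy equivalent. -/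
open Filter Topology

/-- The unit `n`-sphere in `ℝ^(n+1)`. -/
abbrev Sph (n : ℕ) : Type :=
  Metric.sphere (0 : EuclideanSpace ℝ (Fin (n + 1))) 1

/-- The basepoint `s₀ = (1,0,…,0)` of the unit `n`-sphere. -/
noncomputable def spherePt (n : ℕ) : Sph n :=
  ⟨EuclideanSpace.single 0 1, by
    simp [mem_sphere_zero_iff_norm, EuclideanSpace.norm_single]⟩

/-- A continuous map `S^n → X` is essential if it is not homotopic to a constant map. -/
def Essential {n : ℕ} {X : Type*} [TopologicalSpace X] (f : C(Sph n, X)) : Prop :=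
  ∀ x : X, ¬ f.Homotopic (ContinuousMap.const (Sph n) x)

/-- `x` is a `π_n`-wild point of `X` if there is a sequence of essential maps
`S^n → X` based at `x` converging to the constant map at `x` in the compact-open
topology. -/
def IsWildPoint (n : ℕ) {X : Type*} [TopologicalSpace X] (x : X) : Prop :=
  ∃ f : ℕ → C(Sph n, X),
    (∀ k, f k (spherePt n) = x) ∧
    (∀ k, Essential (f k)) ∧
    Tendsto f atTop (𝓝 (ContinuousMap.const (Sph n) x))

/-- The `π_n`-wild set of `X`. -/
def wildSet (n : ℕ) (X : Type*) [TopologicalSpace X] : Set X :=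
  {x | IsWildPoint n x}

/-- A continuous map is `π_n`-injective if precomposition reflects inessentiality. -/
def PiNInjective (n : ℕ) {X Y : Type*} [TopologicalSpace X] [TopologicalSpace Y]
    (f : C(X, Y)) : Prop :=
  ∀ g : C(Sph n, X),
    (∃ y : Y, (f.comp g).Homotopic (ContinuousMap.const (Sph n) y)) →
    ∃ x : X, g.Homotopic (ContinuousMap.const (Sph n) x)

/-- `X` is `π_n`-rigid at `x`. -/
def IsRigidAt (n : ℕ) {X : Type*} [TopologicalSpace X] (x : X) : Prop :=
  ∃ f : ℕ → C(Sph n, X),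
    (∀ k, f k (spherePt n) = x) ∧
    (∀ k, Essential (f k)) ∧
    Tendsto f atTop (𝓝 (ContinuousMap.const (Sph n) x)) ∧
    ∀ β : C(unitInterval, X), β 0 = x →
      ∀ H : ℕ → C(Sph n × unitInterval, X),
        (∀ k s, H k (s, 0) = f k s) →
        (∀ k t, H k (spherePt n, t) = β t) →
        Tendsto H atTop (𝓝 (β.comp (ContinuousMap.snd (α := Sph n)))) →
        β 1 = x

/-!
A map `φ` with a left homotopy inverse `ψ` cannot kill an essential sphere `f`, since
`f ≃ ψ ∘ φ ∘ f`, and postcomposition with `φ` is continuous in the compact-open topology, so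
`φ` maps wild points to wild points. Every time slice of a homotopy `g ∘ f ≃ id` is itself
homotopic to the identity, hence also preserves wild points, so the homotopy restricts to the
wild sets.
-/

open Set

namespace ContinuousMap.Homotopy

variable {X Y : Type*} [TopologicalSpace X] [TopologicalSpace Y] {f₀ f₁ : C(X, Y)}

theorem curry_homotopic_right (F : f₀.Homotopy f₁) (t : unitInterval) :
    (F.curry t).Homotopic f₁ :=
  ⟨{ toFun := fun p => F (max t p.1, p.2)
     map_zero_left := fun x => by simp
     map_one_left := fun x => by simp [unitInterval.le_one'] }⟩

theorem homotopic_of_mapsTo (F : f₀.Homotopy f₁) {s : Set X} {u : Set Y}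
    (hF : ∀ t, MapsTo (F.curry t) s u) {g₀ g₁ : C(s, u)}
    (hg₀ : ∀ x, (g₀ x : Y) = f₀ x) (hg₁ : ∀ x, (g₁ x : Y) = f₁ x) : g₀.Homotopic g₁ :=
  ⟨{ toFun := fun p => ⟨F (p.1, p.2), hF p.1 p.2.2⟩
     map_zero_left := fun x => Subtype.ext (by simp [hg₀])
     map_one_left := fun x => Subtype.ext (by simp [hg₁]) }⟩

end ContinuousMap.Homotopy

section

variable {n : ℕ} {X Y : Type*} [TopologicalSpace X] [TopologicalSpace Y]
  {φ : C(X, Y)} {ψ : C(Y, X)}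

theorem Essential.comp_of_comp_homotopic_id (h : (ψ.comp φ).Homotopic (.id X))
    {f : C(Sph n, X)} (hf : Essential f) : Essential (φ.comp f) := by
  intro y hy
  apply hf (ψ y)
  have hψ : (ψ.comp (φ.comp f)).Homotopic (ψ.comp (.const _ y)) :=
    (ContinuousMap.Homotopic.refl ψ).comp hy
  simpa using (h.symm.comp (.refl f)).trans hψ

theorem IsWildPoint.map_of_comp_homotopic_id (h : (ψ.comp φ).Homotopic (.id X)) {x : X}
    (hx : IsWildPoint n x) : IsWildPoint n (φ x) := by
  obtain ⟨f, hbase, hess, hlim⟩ := hx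
  refine ⟨fun k => φ.comp (f k), fun k => by simp [hbase],
    fun k => (hess k).comp_of_comp_homotopic_id h, ?_⟩
  simpa [Function.comp_def] using ((ContinuousMap.continuous_postcomp φ).tendsto _).comp hlim

theorem IsWildPoint.homotopy_apply {F : C(X, X)} (H : F.Homotopy (.id X)) (t : unitInterval)
    {x : X} (hx : IsWildPoint n x) : IsWildPoint n (H (t, x)) :=
  hx.map_of_comp_homotopic_id (φ := H.curry t) (ψ := .id X) (H.curry_homotopic_right t)

end

theorem stmt0_general {X Y : Type*} [TopologicalSpace X] [TopologicalSpace Y]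
    (n : ℕ) (f : C(X, Y)) (g : C(Y, X))
    (hgf : (g.comp f).Homotopic (ContinuousMap.id X))
    (hfg : (f.comp g).Homotopic (ContinuousMap.id Y)) :
    (∀ x : X, IsWildPoint n x → IsWildPoint n (f x)) ∧
    (∀ y : Y, IsWildPoint n y → IsWildPoint n (g y)) ∧
    ∃ (f' : C(↥(wildSet n X), ↥(wildSet n Y))) (g' : C(↥(wildSet n Y), ↥(wildSet n X))),
      (∀ x : wildSet n X, (f' x : Y) = f (x : X)) ∧
      (∀ y : wildSet n Y, (g' y : X) = g (y : Y)) ∧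
      (g'.comp f').Homotopic (ContinuousMap.id ↥(wildSet n X)) ∧
      (f'.comp g').Homotopic (ContinuousMap.id ↥(wildSet n Y)) := by
  have hf : MapsTo f (wildSet n X) (wildSet n Y) := fun _ hx => hx.map_of_comp_homotopic_id hgf
  have hg : MapsTo g (wildSet n Y) (wildSet n X) := fun _ hy => hy.map_of_comp_homotopic_id hfg
  obtain ⟨H⟩ := hgf
  obtain ⟨K⟩ := hfg
  refine ⟨fun _ hx => hf hx, fun _ hy => hg hy, ⟨_, f.continuous.restrict hf⟩,
    ⟨_, g.continuous.restrict hg⟩, fun _ => rfl, fun _ => rfl, ?_, ?_⟩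
  · exact H.homotopic_of_mapsTo (fun t _ hx => hx.homotopy_apply H t) (fun _ => rfl) fun _ => rfl
  · exact K.homotopic_of_mapsTo (fun t _ hy => hy.homotopy_apply K t) (fun _ => rfl) fun _ => rfl

/-- homotopy invariance of the `π_n`-wild set. -/
theorem stmt0 {X Y : Type*} [TopologicalSpace X] [TopologicalSpace Y]
    [T2Space X] [T2Space Y] (n : ℕ) (f : C(X, Y)) (g : C(Y, X))
    (hgf : (g.comp f).Homotopic (ContinuousMap.id X))
    (hfg : (f.comp g).Homotopic (ContinuousMap.id Y)) :
    (∀ x : X, IsWildPoint n x → IsWildPoint n (f x)) ∧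
    (∀ y : Y, IsWildPoint n y → IsWildPoint n (g y)) ∧
    ∃ (f' : C(↥(wildSet n X), ↥(wildSet n Y))) (g' : C(↥(wildSet n Y), ↥(wildSet n X))),
      (∀ x : wildSet n X, (f' x : Y) = f (x : X)) ∧
      (∀ y : wildSet n Y, (g' y : X) = g (y : Y)) ∧
      (g'.comp f').Homotopic (ContinuousMap.id ↥(wildSet n X)) ∧
      (f'.comp g').Homotopic (ContinuousMap.id ↥(wildSet n Y)) :=
  stmt0_general n f g hgf hfg
end

section
/- Let n ∈ ℕ, let X, Y be Hausdorff topological spaces, and let f : X → Y be a continuous π_n-injective map. Then f maps every π_n-wild point of X to a π_n-wild point of Y, i.e. f(w_n(X)) ⊆ w_n(Y). -/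
open Filter Topology

theorem Essential.comp_of_piNInjective {n : ℕ} {X Y : Type*} [TopologicalSpace X]
    [TopologicalSpace Y] {f : C(X, Y)} (hf : PiNInjective n f) {g : C(Sph n, X)}
    (hg : Essential g) : Essential (f.comp g) := fun y hy ↦
  let ⟨x, hx⟩ := hf g ⟨y, hy⟩
  hg x hx

theorem IsWildPoint.map {n : ℕ} {X Y : Type*} [TopologicalSpace X] [TopologicalSpace Y]
    {f : C(X, Y)} (hf : PiNInjective n f) {x : X} (hx : IsWildPoint n x) :
    IsWildPoint n (f x) := by
  obtain ⟨g, hbase, hess, htend⟩ := hx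
  exact ⟨fun k ↦ f.comp (g k), fun k ↦ congrArg f (hbase k),
    fun k ↦ (hess k).comp_of_piNInjective hf,
    ((ContinuousMap.continuous_postcomp f).tendsto' _ _ (f.comp_const x)).comp htend⟩

theorem stmt1_general {X Y : Type*} [TopologicalSpace X] [TopologicalSpace Y]
    (n : ℕ) (f : C(X, Y)) (hf : PiNInjective n f) :
    (∀ x : X, IsWildPoint n x → IsWildPoint n (f x)) ∧
    ⇑f '' wildSet n X ⊆ wildSet n Y :=
  ⟨fun _ ↦ IsWildPoint.map hf, Set.image_subset_iff.2 fun _ ↦ IsWildPoint.map hf⟩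

/-- a `π_n`-injective map sends `π_n`-wild points to `π_n`-wild points. -/
theorem stmt1 {X Y : Type*} [TopologicalSpace X] [TopologicalSpace Y]
    [T2Space X] [T2Space Y] (n : ℕ) (f : C(X, Y)) (hf : PiNInjective n f) :
    (∀ x : X, IsWildPoint n x → IsWildPoint n (f x)) ∧
    ⇑f '' wildSet n X ⊆ wildSet n Y :=
  stmt1_general n f hf
end

section
/- Let n ∈ ℕ, let X, Y be Hausdorff topological spaces, and let H : X × [0,1] → Y be a continuous map such that the maps x ↦ H(x,0) and x ↦ H(x,1) are both π_n-injective. Then for every π_n-wild point x of X and every t ∈ [0,1], the point H(x,t) is a π_n-wild point of Y; consequently H restricts to a homotopy w_n(X) × [0,1] → w_n(Y) between the restrictions of H(·,0) and H(·,1) to the wild sets. -/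
open Filter Topology

/-- a homotopy between `π_n`-injective maps restricts to a homotopy
between the restrictions to the wild sets. -/
theorem stmt2 {X Y : Type*} [TopologicalSpace X] [TopologicalSpace Y]
    [T2Space X] [T2Space Y] (n : ℕ) (H : C(X × unitInterval, Y))
    (h0 : PiNInjective n (⟨fun x => H (x, 0), by fun_prop⟩ : C(X, Y)))
    (h1 : PiNInjective n (⟨fun x => H (x, 1), by fun_prop⟩ : C(X, Y))) :
    (∀ x : X, IsWildPoint n x → ∀ t : unitInterval, IsWildPoint n (H (x, t))) ∧
    ∃ G : C(↥(wildSet n X) × unitInterval, ↥(wildSet n Y)),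
      ∀ (x : wildSet n X) (t : unitInterval), (G (x, t) : Y) = H ((x : X), t) := by
  -- Main claim: wild points are preserved.
  have key : ∀ x : X, IsWildPoint n x → ∀ t : unitInterval, IsWildPoint n (H (x, t)) := by
    intro x hx t
    obtain ⟨f, hbase, hess, htend⟩ := hx
    set H0 : C(X, Y) := ⟨fun x => H (x, 0), by fun_prop⟩ with hH0
    set Ht : C(X, Y) := ⟨fun x => H (x, t), by fun_prop⟩ with hHt
    -- homotopy between H0.comp g and Ht.comp g
    have htp : ∀ g : C(Sph n, X), (H0.comp g).Homotopic (Ht.comp g) := by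
      intro g
      refine ⟨⟨⟨fun p => H (g p.2, p.1 * t), ?_⟩, ?_, ?_⟩⟩
      · have hcm : Continuous fun p : unitInterval × Sph n => (p.1 * t : unitInterval) := by
          apply Continuous.subtype_mk
          exact ((continuous_subtype_val.comp continuous_fst).mul continuous_const)
        exact H.continuous.comp (((g.continuous.comp continuous_snd).prodMk hcm))
      · intro s; show H (g s, 0 * t) = H (g s, 0); rw [zero_mul]
      · intro s; show H (g s, 1 * t) = H (g s, t); rw [one_mul]
    refine ⟨fun k => Ht.comp (f k), ?_, ?_, ?_⟩
    · intro k; simp [Ht, hbase k]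
    · intro k y hy
      obtain ⟨x', hx'⟩ := h0 (f k) ⟨y, ((htp (f k)).trans hy)⟩
      exact hess k x' hx'
    · have hc : Continuous fun g : C(Sph n, X) => Ht.comp g :=
        ContinuousMap.continuous_postcomp Ht
      have := (hc.tendsto (ContinuousMap.const (Sph n) x)).comp htend
      exact this
  refine ⟨key, ?_⟩
  refine ⟨⟨fun p => ⟨H ((p.1 : X), p.2), key p.1 p.1.2 p.2⟩, ?_⟩, fun x t => rfl⟩
  exact (H.continuous.comp ((continuous_subtype_val.comp continuous_fst).prodMk
    continuous_snd)).subtype_mk _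
end

section
/- Let n ≥ 1, let X be a Hausdorff topological space, and let A ⊆ X be a retract of X, i.e. there exists a continuous map r : X → A with r(a) = a for all a ∈ A. Then every π_n-wild point of the subspace A (with its subspace topology) is a π_n-wild point of X; that is, w_n(A) ⊆ w_n(X). -/
open Filter Topology

theorem Essential.of_comp {n : ℕ} {X Y : Type*} [TopologicalSpace X] [TopologicalSpace Y]
    {f : C(Sph n, X)} (g : C(X, Y)) (h : Essential (g.comp f)) : Essential f := fun x hx =>
  h (g x) (by simpa using (ContinuousMap.Homotopic.refl g).comp hx)

theorem IsWildPoint.map_of_leftInverse {n : ℕ} {X Y : Type*} [TopologicalSpace X]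
    [TopologicalSpace Y] (i : C(Y, X)) (r : C(X, Y)) (hri : Function.LeftInverse r i) {y : Y}
    (hy : IsWildPoint n y) : IsWildPoint n (i y) := by
  obtain ⟨f, hbase, hess, htend⟩ := hy
  refine ⟨fun k => i.comp (f k), fun k => by simp [hbase k], fun k => ?_, ?_⟩
  · have hrif : r.comp (i.comp (f k)) = f k := ContinuousMap.ext fun s => hri (f k s)
    exact Essential.of_comp r (hrif ▸ hess k)
  · exact (i.continuous_postcomp.tendsto _).comp htend

theorem stmt3_general {X : Type*} [TopologicalSpace X] (n : ℕ)
    (A : Set X) (r : C(X, ↥A)) (hr : ∀ a : A, r (a : X) = a) :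
    ∀ a : A, IsWildPoint n a → IsWildPoint n (a : X) := fun _ =>
  IsWildPoint.map_of_leftInverse ⟨Subtype.val, continuous_subtype_val⟩ r hr

/-- wild points of a retract are wild points of the ambient space. -/
theorem stmt3 {X : Type*} [TopologicalSpace X] [T2Space X] (n : ℕ) (hn : 1 ≤ n)
    (A : Set X) (r : C(X, ↥A)) (hr : ∀ a : A, r (a : X) = a) :
    ∀ a : A, IsWildPoint n a → IsWildPoint n (a : X) :=
  stmt3_general n A r hr
end

section
/- Let n ∈ ℕ and let Z be a Hausdorff topological space with closed subsets X and Y such that X ∪ Y = Z and X ∩ Y = {x₀}. Assume there exist continuous retractions r : Z → X and s : Z → Y (so r is the identity on X and s is the identity on Y) with r(Y) = {x₀} and s(X) = {x₀}. Then w_n(X) ∪ w_n(Y) ⊆ w_n(Z) ⊆ w_n(X) ∪ w_n(Y) ∪ {x₀}, where w_n(X) and w_n(Y) denote the sets of π_n-wild points of the subspaces X and Y respectively, and w_n(Z) denotes the set of π_n-wild points of Z. -/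
/-!
A wild point is carried along any continuous map that preserves essentiality of the spheres
near it. The inclusion `X ↪ Z` does so because it has the retraction `r`. Conversely, a point
`z ≠ x₀` of `X` lies off the closed set `Y`, so `X` is a neighbourhood of `z`; the spheres of a
wild sequence at `z` eventually lie in `X`, where `r` is the identity, and `r` keeps them
essential since composing back with the inclusion returns them.
-/

open Filter Topology

namespace Essential

variable {n : ℕ} {A B : Type*} [TopologicalSpace A] [TopologicalSpace B]

theorem of_comp_s4 (φ : C(A, B)) {f : C(Sph n, A)} (hf : Essential (φ.comp f)) : Essential f :=
  fun a hfa => hf (φ a) <| by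
    simpa only [ContinuousMap.comp_const] using (ContinuousMap.Homotopic.refl φ).comp hfa

theorem comp_of_leftInverse (φ : C(A, B)) (ψ : C(B, A)) (hψφ : ∀ a, ψ (φ a) = a)
    {f : C(Sph n, A)} (hf : Essential f) : Essential (φ.comp f) :=
  of_comp_s4 ψ <| by
    rwa [show ψ.comp (φ.comp f) = f from ContinuousMap.ext fun s => hψφ (f s)]

end Essential

namespace IsWildPoint

variable {n : ℕ} {A B : Type*} [TopologicalSpace A] [TopologicalSpace B]

theorem of_eventually {f : ℕ → C(Sph n, A)} {a : A}
    (hf : ∀ᶠ k in atTop, f k (spherePt n) = a ∧ Essential (f k))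
    (hlim : Tendsto f atTop (𝓝 (ContinuousMap.const (Sph n) a))) : IsWildPoint n a := by
  obtain ⟨N, hN⟩ := eventually_atTop.mp hf
  exact ⟨fun k => f (k + N), fun k => (hN _ (Nat.le_add_left N k)).1,
    fun k => (hN _ (Nat.le_add_left N k)).2, (tendsto_add_atTop_iff_nat N).mpr hlim⟩

theorem map_s4 (φ : C(A, B)) {a : A} (ha : IsWildPoint n a) {U : Set A} (hU : U ∈ 𝓝 a)
    (hφ : ∀ g : C(Sph n, A), Set.range g ⊆ U → Essential g → Essential (φ.comp g)) :
    IsWildPoint n (φ a) := by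
  obtain ⟨f, hbase, hess, hlim⟩ := ha
  have hrange : ∀ᶠ k in atTop, Set.range (f k) ⊆ U := by
    have hnhds : {g : C(Sph n, A) | Set.range g ⊆ interior U} ∈
        𝓝 (ContinuousMap.const (Sph n) a) :=
      (ContinuousMap.isOpen_setOfPred_range_subset isOpen_interior).mem_nhds <| by
        rintro _ ⟨_, rfl⟩
        exact mem_interior_iff_mem_nhds.mpr hU
    exact (hlim.eventually hnhds).mono fun k hk => hk.trans interior_subset
  refine of_eventually (f := fun k => φ.comp (f k)) (hrange.mono fun k hk => ?_) ?_
  · exact ⟨congrArg φ (hbase k), hφ (f k) hk (hess k)⟩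
  · simpa only [Function.comp_def, ContinuousMap.comp_const] using
      ((ContinuousMap.continuous_postcomp φ).tendsto _).comp hlim

theorem map_of_leftInverse_s4 (φ : C(A, B)) (ψ : C(B, A)) (hψφ : ∀ a, ψ (φ a) = a) {a : A}
    (ha : IsWildPoint n a) : IsWildPoint n (φ a) :=
  ha.map_s4 φ univ_mem fun _ _ hg => hg.comp_of_leftInverse φ ψ hψφ

theorem restrict {Z : Type*} [TopologicalSpace Z] {X : Set Z} (r : C(Z, X))
    (hr : ∀ x : X, r x = x) {z : Z} (hzX : z ∈ X) (hX : X ∈ 𝓝 z) (hz : IsWildPoint n z) :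
    IsWildPoint n (⟨z, hzX⟩ : X) := by
  rw [← hr ⟨z, hzX⟩]
  refine hz.map_s4 r hX fun g hg hess =>
    Essential.of_comp_s4 (⟨(↑), continuous_subtype_val⟩ : C(X, Z)) ?_
  convert hess
  ext p
  simpa using congrArg Subtype.val (hr ⟨g p, hg ⟨p, rfl⟩⟩)

end IsWildPoint

theorem stmt4_general {Z : Type*} [TopologicalSpace Z] (n : ℕ)
    (X Y : Set Z) (x₀ : Z) (hX : IsClosed X) (hY : IsClosed Y)
    (hunion : X ∪ Y = Set.univ) (hinter : X ∩ Y = {x₀})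
    (r : C(Z, ↥X)) (hr : ∀ x : X, r (x : Z) = x)
    (s : C(Z, ↥Y)) (hs : ∀ y : Y, s (y : Z) = y) :
    (∀ x : X, IsWildPoint n x → IsWildPoint n (x : Z)) ∧
    (∀ y : Y, IsWildPoint n y → IsWildPoint n (y : Z)) ∧
    (∀ z : Z, IsWildPoint n z →
      z = x₀ ∨ (∃ h : z ∈ X, IsWildPoint n (⟨z, h⟩ : X)) ∨
        (∃ h : z ∈ Y, IsWildPoint n (⟨z, h⟩ : Y))) := by
  refine ⟨fun x hx => hx.map_of_leftInverse_s4 ⟨(↑), continuous_subtype_val⟩ r hr,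
    fun y hy => hy.map_of_leftInverse_s4 ⟨(↑), continuous_subtype_val⟩ s hs, fun z hz => ?_⟩
  obtain rfl | hz₀ := eq_or_ne z x₀
  · exact Or.inl rfl
  have hnot_both : z ∈ X → z ∉ Y := fun hzX hzY => hz₀ (hinter.subset ⟨hzX, hzY⟩)
  rcases (hunion.symm.subset (Set.mem_univ z) : z ∈ X ∪ Y) with hzX | hzY
  · have hXz : X ∈ 𝓝 z := mem_of_superset (hY.isOpen_compl.mem_nhds (hnot_both hzX))
      (Set.compl_subset_iff_union.mpr (Set.union_comm X Y ▸ hunion))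
    exact Or.inr (Or.inl ⟨hzX, hz.restrict r hr hzX hXz⟩)
  · have hYz : Y ∈ 𝓝 z :=
      mem_of_superset (hX.isOpen_compl.mem_nhds fun hzX => hnot_both hzX hzY)
        (Set.compl_subset_iff_union.mpr hunion)
    exact Or.inr (Or.inr ⟨hzY, hz.restrict s hs hzY hYz⟩)

/-- wild set of a wedge `Z = X ∨ Y`. -/
theorem stmt4 {Z : Type*} [TopologicalSpace Z] [T2Space Z] (n : ℕ)
    (X Y : Set Z) (x₀ : Z) (hX : IsClosed X) (hY : IsClosed Y)
    (hunion : X ∪ Y = Set.univ) (hinter : X ∩ Y = {x₀})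
    (r : C(Z, ↥X)) (hr : ∀ x : X, r (x : Z) = x) (hrY : ∀ y ∈ Y, ((r y : X) : Z) = x₀)
    (s : C(Z, ↥Y)) (hs : ∀ y : Y, s (y : Z) = y) (hsX : ∀ x ∈ X, ((s x : Y) : Z) = x₀) :
    (∀ x : X, IsWildPoint n x → IsWildPoint n (x : Z)) ∧
    (∀ y : Y, IsWildPoint n y → IsWildPoint n (y : Z)) ∧
    (∀ z : Z, IsWildPoint n z →
      z = x₀ ∨ (∃ h : z ∈ X, IsWildPoint n (⟨z, h⟩ : X)) ∨
        (∃ h : z ∈ Y, IsWildPoint n (⟨z, h⟩ : Y))) :=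
  stmt4_general n X Y x₀ hX hY hunion hinter r hr s hs
end

section
/- Let n ∈ ℕ and let X be a Hausdorff, first-countable, locally path-connected topological space. Then the set of π_n-wild points of X is closed in X. -/
open Filter Topology

/-!
If `x` is a limit of `π_n`-wild points, every neighbourhood `W` of `x` contains an open
path-connected `V ∋ x` and a wild point `y ∈ V`, hence an essential map `S^n → V` based at `y`.
Precomposing it with a self-map of the sphere that is homotopic to the identity and collapses a
cap around the basepoint, and letting the cap run along a path in `V` from `x` to `y`, gives a
homotopic (so still essential) map `S^n → V` based at `x`. Doing this along a countable
neighbourhood basis at `x` yields a sequence of such maps converging to the constant map.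
-/

open Set Metric unitInterval

section CapCollapse

variable {E : Type*} [NormedAddCommGroup E] [InnerProductSpace ℝ E]

/-- Scales the part of `s` orthogonal to `e` by `max 0 (1 - 2 t ⟪e, s⟫)`: the identity at
`t = 0`, and at `t = 1` it kills that part on the cap `⟪e, s⟫ ≥ 1/2`. -/
noncomputable def capShrink (e s : E) (t : ℝ) : E :=
  inner ℝ e s • e + max 0 (1 - 2 * t * inner ℝ e s) • (s - inner ℝ e s • e)

lemma capShrink_zero (e s : E) : capShrink e s 0 = s := by
  simp [capShrink]

lemma capShrink_ne_zero {e s : E} (he : ‖e‖ = 1) (hs : s ≠ 0) (t : ℝ) :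
    capShrink e s t ≠ 0 := by
  by_cases hc : inner ℝ e s = 0
  · simpa [capShrink, hc] using hs
  · intro h
    have : inner ℝ e (capShrink e s t) = inner ℝ e s := by
      simp [capShrink, inner_add_right, inner_smul_right, inner_sub_right, he]
    rw [h, inner_zero_right] at this
    exact hc this.symm

lemma capShrink_one_of_le {e s : E} (hs : 1 / 2 ≤ inner ℝ e s) :
    capShrink e s 1 = inner ℝ e s • e := by
  rw [capShrink, max_eq_left (by linarith), zero_smul, add_zero]

lemma continuous_capShrink (e : E) : Continuous fun p : ℝ × E => capShrink e p.2 p.1 := by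
  unfold capShrink; fun_prop

noncomputable def capCollapseHomotopy (e : sphere (0 : E) 1) :
    C(I × sphere (0 : E) 1, sphere (0 : E) 1) where
  toFun p := ⟨‖capShrink (e : E) p.2 p.1‖⁻¹ • capShrink (e : E) p.2 p.1, by
    rw [mem_sphere_zero_iff_norm, norm_smul, norm_inv, norm_norm,
      inv_mul_cancel₀ (norm_ne_zero_iff.mpr
        (capShrink_ne_zero (norm_eq_of_mem_sphere e) (ne_zero_of_mem_unit_sphere p.2) _))]⟩
  continuous_toFun := by
    have h : Continuous fun p : I × sphere (0 : E) 1 => capShrink (e : E) p.2 p.1 :=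
      (continuous_capShrink (e : E)).comp (continuous_subtype_val.prodMap continuous_subtype_val)
    refine Continuous.subtype_mk ((h.norm.inv₀ fun p => ?_).smul h) _
    exact norm_ne_zero_iff.mpr
      (capShrink_ne_zero (norm_eq_of_mem_sphere e) (ne_zero_of_mem_unit_sphere p.2) _)

lemma exists_homotopic_id_eq_on_cap (e : sphere (0 : E) 1) :
    ∃ Q : C(sphere (0 : E) 1, sphere (0 : E) 1), (ContinuousMap.id _).Homotopic Q ∧
      ∀ s : sphere (0 : E) 1, 1 / 2 ≤ inner ℝ (e : E) s → Q s = e := by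
  set F := capCollapseHomotopy e
  refine ⟨⟨fun s => F (1, s), by fun_prop⟩, ⟨⟨F, fun s => ?_, fun s => rfl⟩⟩, fun s hs => ?_⟩
  · ext1
    simp [F, capCollapseHomotopy, capShrink_zero, norm_eq_of_mem_sphere s]
  · ext1
    have hc : 0 < inner ℝ (e : E) s := by linarith
    simp [F, capCollapseHomotopy, capShrink_one_of_le hs, norm_smul, norm_eq_of_mem_sphere e,
      abs_of_pos hc, smul_smul, hc.ne']

end CapCollapse

section BasepointChange

variable {E X : Type*} [NormedAddCommGroup E] [InnerProductSpace ℝ E] [TopologicalSpace X]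

/-- Precomposing with a map that collapses a cap around `e`, the freed cap carries `β`
backwards, so the new map sends `e` to the start `x` of `β`. -/
lemma ContinuousMap.exists_homotopic_apply_eq_of_path (f : C(sphere (0 : E) 1, X))
    (e : sphere (0 : E) 1) {x : X} (β : Path x (f e)) :
    ∃ g : C(sphere (0 : E) 1, X), g e = x ∧ range g ⊆ range f ∪ range β ∧ g.Homotopic f := by
  obtain ⟨Q, hQ, hQe⟩ := exists_homotopic_id_eq_on_cap e
  set c : sphere (0 : E) 1 → ℝ := fun s => inner ℝ (e : E) s
  have hG : Continuous fun p : I × sphere (0 : E) 1 =>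
      if c p.2 ≤ 1 / 2 then f (Q p.2) else β.extend (1 - p.1 * (2 * c p.2 - 1)) :=
    Continuous.if_le (by fun_prop) (by fun_prop) (by fun_prop) continuous_const
      fun p hp => by simp [hQe p.2 hp.ge, hp]
  set G : C(I × sphere (0 : E) 1, X) := ⟨_, hG⟩
  set g : C(sphere (0 : E) 1, X) := ⟨fun s => G (1, s), by fun_prop⟩
  refine ⟨g, ?_, ?_, ?_⟩
  · have hce : c e = 1 := by simp [c, norm_eq_of_mem_sphere e]
    simp only [g, G, ContinuousMap.coe_mk, hce]
    norm_num
  · rintro _ ⟨s, rfl⟩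
    simp only [g, G, ContinuousMap.coe_mk]
    split_ifs
    · exact .inl (mem_range_self _)
    · exact .inr (β.extend_range ▸ mem_range_self _)
  · have hfQ : (f.comp Q).Homotopic f := by
      simpa using (ContinuousMap.Homotopic.refl f).comp hQ.symm
    refine ContinuousMap.Homotopic.trans ?_ hfQ
    refine ContinuousMap.Homotopic.symm ⟨⟨G, fun s => ?_, fun s => rfl⟩⟩
    simp only [G, Icc.coe_zero, zero_mul, sub_zero, Path.extend_one]
    split_ifs with hs
    · rfl
    · rw [ContinuousMap.comp_apply, hQe s (not_le.mp hs).le]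

end BasepointChange

section WildSet

variable {X : Type*} [TopologicalSpace X]

lemma ContinuousMap.tendsto_const_of_tendsto_range_smallSets {ι Y : Type*} [TopologicalSpace Y]
    {l : Filter ι} {g : ι → C(Y, X)} {x : X}
    (h : Tendsto (fun i => range (g i)) l (𝓝 x).smallSets) :
    Tendsto g l (𝓝 (ContinuousMap.const Y x)) := by
  rw [ContinuousMap.tendsto_nhds_compactOpen]
  intro K _ W hW hKW
  rcases K.eq_empty_or_nonempty with rfl | ⟨a, ha⟩
  · exact Eventually.of_forall fun _ => mapsTo_empty _ _
  · filter_upwards [tendsto_smallSets_iff.mp h W (hW.mem_nhds (hKW ha))] with i hi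
    exact fun s _ => hi (mem_range_self s)

variable {n : ℕ}

lemma Essential.of_homotopic {f g : C(Sph n, X)} (hf : Essential f) (h : g.Homotopic f) :
    Essential g :=
  fun x hx => hf x (h.symm.trans hx)

lemma exists_essential_range_subset_of_mem_closure [LocallyPathConnectedSpace X] {x : X}
    (hx : x ∈ closure (wildSet n X)) {W : Set X} (hW : W ∈ 𝓝 x) :
    ∃ g : C(Sph n, X), g (spherePt n) = x ∧ Essential g ∧ range g ⊆ W := by
  have hxW : x ∈ interior W := mem_interior_iff_mem_nhds.mpr hW
  set V := pathComponentIn (interior W) x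
  have hxV : x ∈ V := mem_pathComponentIn_self hxW
  have hVo : IsOpen V := isOpen_interior.pathComponentIn x
  obtain ⟨y, hyV, f, hf_base, hf_ess, hf_lim⟩ := mem_closure_iff_nhds.mp hx V (hVo.mem_nhds hxV)
  obtain ⟨k, hk⟩ := (ContinuousMap.tendsto_nhds_compactOpen.mp hf_lim univ isCompact_univ V hVo
    fun _ _ => hyV).exists
  obtain ⟨β, hβ⟩ := (isPathConnected_pathComponentIn hxW).joinedIn x hxV
    (f k (spherePt n)) (hf_base k ▸ hyV)
  obtain ⟨g, hg_base, hg_range, hg⟩ := (f k).exists_homotopic_apply_eq_of_path (spherePt n) β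
  refine ⟨g, hg_base, (hf_ess k).of_homotopic hg, hg_range.trans ?_⟩
  exact union_subset (range_subset_iff.mpr fun s => hk (mem_univ s)) (range_subset_iff.mpr hβ)
    |>.trans (pathComponentIn_subset.trans interior_subset)

end WildSet

theorem stmt5_general {X : Type*} [TopologicalSpace X]
    [FirstCountableTopology X] [LocallyPathConnectedSpace X] (n : ℕ) :
    IsClosed (wildSet n X) := by
  refine isClosed_of_closure_subset fun x hx => ?_
  obtain ⟨U, hU⟩ := (𝓝 x).exists_antitone_basis
  choose g hg_base hg_ess hg_range using
    fun k => exists_essential_range_subset_of_mem_closure hx (hU.mem k)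
  exact ⟨g, hg_base, hg_ess, ContinuousMap.tendsto_const_of_tendsto_range_smallSets
    (hU.tendsto_smallSets.smallSets_mono (Eventually.of_forall hg_range))⟩

/-- in a Hausdorff, first-countable, locally path-connected space,
the `π_n`-wild set is closed. -/
theorem stmt5 {X : Type*} [TopologicalSpace X] [T2Space X]
    [FirstCountableTopology X] [LocallyPathConnectedSpace X] (n : ℕ) :
    IsClosed (wildSet n X) :=
  stmt5_general n
end

section
/- Let n, m ∈ ℕ and let X be a subset of ℝ^m equipped with the subspace topology. Then the interior, computed in ℝ^m, of the set of π_n-wild points of X is empty. -/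
open Filter Topology

/-- the interior in `ℝ^m` of the `π_n`-wild set of a subset of
`ℝ^m` is empty. -/
theorem stmt7 (n m : ℕ) (X : Set (EuclideanSpace ℝ (Fin m))) :
    interior {p : EuclideanSpace ℝ (Fin m) |
      ∃ h : p ∈ X, IsWildPoint n (⟨p, h⟩ : X)} = ∅ := by
  by_contra hne
  obtain ⟨q, hq⟩ := Set.nonempty_iff_ne_empty.mpr hne
  obtain ⟨ε, hε, hball⟩ := Metric.isOpen_iff.mp isOpen_interior q hq
  have hball' : Metric.ball q ε ⊆ {p : EuclideanSpace ℝ (Fin m) |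
      ∃ h : p ∈ X, IsWildPoint n (⟨p, h⟩ : X)} :=
    hball.trans interior_subset
  obtain ⟨hqX, f, hf0, hess, htend⟩ := hball' (Metric.mem_ball_self hε)
  -- uniform convergence
  have hU := (ContinuousMap.tendsto_iff_tendstoUniformly.mp htend)
  rw [Metric.tendstoUniformly_iff] at hU
  have := hU ε hε
  rw [Filter.eventually_atTop] at this
  obtain ⟨N, hN⟩ := this
  -- f N maps into the ball
  have hmem : ∀ s : Sph n, ((f N s : X) : EuclideanSpace ℝ (Fin m)) ∈ Metric.ball q ε := by
    intro s
    have := hN N le_rfl s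
    rw [Subtype.dist_eq] at this
    simpa [Metric.mem_ball, dist_comm] using this
  -- construct nullhomotopy inside the ball, hence inside X
  have hXball : Metric.ball q ε ⊆ X := fun p hp => (hball' hp).1
  refine hess N ⟨q, hqX⟩ ⟨⟨⟨fun p => ⟨(1 - (p.1 : ℝ)) • ((f N p.2 : X) : EuclideanSpace ℝ (Fin m))
      + (p.1 : ℝ) • q, ?_⟩, ?_⟩, ?_, ?_⟩⟩
  · exact hXball ((convex_ball q ε) (hmem p.2) (Metric.mem_ball_self hε)
      (by linarith [p.1.2.2]) p.1.2.1 (by ring))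
  · refine Continuous.subtype_mk ?_ _
    fun_prop
  · intro s
    ext
    simp
  · intro s
    ext
    simp
end

section
/- Let n ∈ ℕ, let I be a finite set, and let (X_i)_{i∈I} be a family of path-connected Hausdorff topological spaces. For a point x = (x_i)_{i∈I} of the product Π_{i∈I} X_i (with the product topology), x is a π_n-wild point of Π_{i∈I} X_i if and only if there exists i ∈ I such that x_i is a π_n-wild point of X_i. -/
open Filter Topology

/-! Homotopies into a product are families of homotopies of the coordinates, so a map
`S^n → ∏ X_i` into a finite product is essential iff some coordinate is. A sequence of essential
loops at `x` therefore has, by pigeonhole, a subsequence essential in one fixed coordinate `i`,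
and projecting it exhibits `x i` as wild. Conversely, the slice `X_i → ∏ X_j` through `x` has the
projection as a retraction, hence carries essential maps to essential maps. -/

namespace Essential

variable {n : ℕ} {X Y : Type*} [TopologicalSpace X] [TopologicalSpace Y]

theorem of_comp_s9 {g : C(X, Y)} {f : C(Sph n, X)} (h : Essential (g.comp f)) : Essential f :=
  fun c hc => h (g c) (by simpa using (ContinuousMap.Homotopic.refl g).comp hc)

theorem exists_eval_comp {I : Type*} [Finite I] {X : I → Type*} [∀ i, TopologicalSpace (X i)]
    {f : C(Sph n, ∀ i, X i)} (h : Essential f) : ∃ i, Essential ((ContinuousMap.eval i).comp f) := by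
  by_contra! hinessential
  simp only [Essential, not_forall, not_not] at hinessential
  choose c hc using hinessential
  exact h c (ContinuousMap.Homotopic.pi hc)

end Essential

theorem isWildPoint_apply_of_tendsto {n : ℕ} {X Y : Type*} [TopologicalSpace X]
    [TopologicalSpace Y] (g : C(X, Y)) {x : X} {f : ℕ → C(Sph n, X)}
    (hbase : ∀ k, f k (spherePt n) = x) (hess : ∀ k, Essential (g.comp (f k)))
    (hlim : Tendsto f atTop (𝓝 (ContinuousMap.const (Sph n) x))) :
    IsWildPoint n (g x) := by
  refine ⟨fun k => g.comp (f k), fun k => by simp [hbase k], hess, ?_⟩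
  rw [← ContinuousMap.comp_const]
  exact ((ContinuousMap.continuous_postcomp g).tendsto _).comp hlim

theorem stmt9_general {I : Type*} [Finite I] (n : ℕ) (X : I → Type*)
    [∀ i, TopologicalSpace (X i)]
    (x : ∀ i, X i) :
    IsWildPoint n x ↔ ∃ i, IsWildPoint n (x i) := by
  constructor
  · rintro ⟨f, hbase, hess, hlim⟩
    have hfreq : ∃ᶠ k in atTop, ∃ i, Essential ((ContinuousMap.eval i).comp (f k)) :=
      Frequently.of_forall fun k => (hess k).exists_eval_comp
    obtain ⟨i, hi⟩ := frequently_exists.mp hfreq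
    obtain ⟨φ, hφ, hφess⟩ := extraction_of_frequently_atTop hi
    exact ⟨i, isWildPoint_apply_of_tendsto (ContinuousMap.eval i) (fun k => hbase (φ k)) hφess
      (hlim.comp hφ.tendsto_atTop)⟩
  · rintro ⟨i, f, hbase, hess, hlim⟩
    classical
    let slice : C(X i, ∀ j, X j) := ⟨Function.update x i, by fun_prop⟩
    have hretract : ∀ k, (ContinuousMap.eval i).comp (slice.comp (f k)) = f k := fun k => by
      ext s; simp [slice]
    have hslice : slice (x i) = x := Function.update_eq_self i x
    rw [← hslice]
    exact isWildPoint_apply_of_tendsto slice hbase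
      (fun k => Essential.of_comp_s9 (g := ContinuousMap.eval i) (by rw [hretract]; exact hess k)) hlim

/-- wild points of a finite product of path-connected spaces. -/
theorem stmt9 {I : Type*} [Finite I] (n : ℕ) (X : I → Type*)
    [∀ i, TopologicalSpace (X i)] [∀ i, T2Space (X i)] [∀ i, PathConnectedSpace (X i)]
    (x : ∀ i, X i) :
    IsWildPoint n x ↔ ∃ i, IsWildPoint n (x i) :=
  stmt9_general n X x
end

section
/- Let n ∈ ℕ, let X, Y be Hausdorff topological spaces, and let f : X → Y and g : Y → X be continuous maps with g ∘ f homotopic to the identity of X and f ∘ g homotopic to the identity of Y. Then g(f(x)) = x for every point x at which X is π_n-rigid, and f(g(y)) = y for every point y at which Y is π_n-rigid. -/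
open Filter Topology

lemma key_rigid {X Y : Type*} [TopologicalSpace X] [TopologicalSpace Y]
    (n : ℕ) (f : C(X, Y)) (g : C(Y, X))
    (hgf : (g.comp f).Homotopic (ContinuousMap.id X))
    (x : X) (hx : IsRigidAt n x) : g (f x) = x := by
  obtain ⟨F⟩ := hgf
  obtain ⟨fk, hbase, hess, htend, hrigid⟩ := hx
  let Θ : C(X × unitInterval, X) :=
    ⟨fun p => F (unitInterval.symm p.2, p.1),
     F.continuous.comp ((unitInterval.continuous_symm.comp continuous_snd).prodMk
       continuous_fst)⟩
  let Ψ : C(X, C(unitInterval, X)) := Θ.curry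
  let β : C(unitInterval, X) := Ψ x
  have hβ0 : β 0 = x := by
    simp only [β, Ψ, Θ, ContinuousMap.curry_apply, ContinuousMap.coe_mk]
    rw [unitInterval.symm_zero, F.apply_one]
    rfl
  have hβ1 : β 1 = g (f x) := by
    simp only [β, Ψ, Θ, ContinuousMap.curry_apply, ContinuousMap.coe_mk]
    rw [unitInterval.symm_one, F.apply_zero]
    rfl
  let H : ℕ → C(Sph n × unitInterval, X) := fun k => (Ψ.comp (fk k)).uncurry
  have hH0 : ∀ k s, H k (s, 0) = fk k s := by
    intro k s
    show F (unitInterval.symm 0, fk k s) = fk k s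
    rw [unitInterval.symm_zero, F.apply_one]
    rfl
  have hHpt : ∀ k t, H k (spherePt n, t) = β t := by
    intro k t
    show Θ ((fk k) (spherePt n), t) = Θ (x, t)
    rw [hbase]
  have hcont : Continuous fun h : C(Sph n, X) => (Ψ.comp h).uncurry :=
    ContinuousMap.continuous_uncurry.comp (ContinuousMap.continuous_postcomp Ψ)
  have hlim : (Ψ.comp (ContinuousMap.const (Sph n) x)).uncurry
      = β.comp (ContinuousMap.snd (α := Sph n)) := by
    ext ⟨s, t⟩; rfl
  have hHtend : Tendsto H atTop (𝓝 (β.comp (ContinuousMap.snd (α := Sph n)))) := by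
    rw [← hlim]
    exact (hcont.tendsto _).comp htend
  rw [← hβ1]
  exact hrigid β hβ0 H hH0 hHpt hHtend

/-- homotopy inverses fix all `π_n`-rigid points. -/
theorem stmt14 {X Y : Type*} [TopologicalSpace X] [TopologicalSpace Y]
    [T2Space X] [T2Space Y] (n : ℕ) (f : C(X, Y)) (g : C(Y, X))
    (hgf : (g.comp f).Homotopic (ContinuousMap.id X))
    (hfg : (f.comp g).Homotopic (ContinuousMap.id Y)) :
    (∀ x : X, IsRigidAt n x → g (f x) = x) ∧
    (∀ y : Y, IsRigidAt n y → f (g y) = y) := by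
  exact ⟨fun x hx => key_rigid n f g hgf x hx, fun y hy => key_rigid n g f hfg y hy⟩
end

section
/- Let n ∈ ℕ and let X, Y be Hausdorff topological spaces that are completely π_n-rigid (i.e. rg_n(X) = w_n(X) and rg_n(Y) = w_n(Y)). If there exist continuous maps f : X → Y and g : Y → X with g ∘ f homotopic to the identity of X and f ∘ g homotopic to the identity of Y, then f restricts to a homeomorphism from w_n(X) onto w_n(Y) (with their subspace topologies), whose inverse is the restriction of g. -/
open Filter Topology

/-!
A homotopy `K` from the identity to `g ∘ f`, run along a sequence of small essential spheres
at a `π_n`-rigid point `x`, gives homotopies converging to the path `t ↦ K (t, x)`; rigidity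
forces this path to return to `x`, so `g (f x) = x`. Since `f` and `g` preserve essential maps
and hence wild points, on the wild sets (where every point is rigid) they are mutually inverse.
-/

namespace Homeomorph

variable {X Y : Type*} [TopologicalSpace X] [TopologicalSpace Y]

def ofInvOn {f : X → Y} {g : Y → X} {s : Set X} {t : Set Y} (hf_cont : ContinuousOn f s)
    (hg_cont : ContinuousOn g t) (hf : Set.MapsTo f s t) (hg : Set.MapsTo g t s)
    (hgf : Set.InvOn g f s t) : s ≃ₜ t where
  toFun := hf.restrict f s t
  invFun := hg.restrict g t s
  left_inv x := Subtype.ext (hgf.1 x.2)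
  right_inv y := Subtype.ext (hgf.2 y.2)
  continuous_toFun := hf_cont.mapsToRestrict hf
  continuous_invFun := hg_cont.mapsToRestrict hg

end Homeomorph

section

open ContinuousMap

variable {n : ℕ} {X Y : Type*} [TopologicalSpace X] [TopologicalSpace Y]

theorem Essential.comp_of_homotopic_id {f : C(X, Y)} {g : C(Y, X)}
    (hgf : (g.comp f).Homotopic (ContinuousMap.id X)) {φ : C(Sph n, X)} (hφ : Essential φ) :
    Essential (f.comp φ) := by
  intro y hy
  apply hφ (g y)
  have hφ_gf : ((g.comp f).comp φ).Homotopic φ := by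
    simpa only [id_comp] using hgf.comp (Homotopic.refl φ)
  have hgy : (g.comp (f.comp φ)).Homotopic (const (Sph n) (g y)) := by
    simpa only [comp_const] using (Homotopic.refl g).comp hy
  exact hφ_gf.symm.trans hgy

theorem IsWildPoint.map_of_homotopic_id {f : C(X, Y)} {g : C(Y, X)}
    (hgf : (g.comp f).Homotopic (ContinuousMap.id X)) {x : X} (hx : IsWildPoint n x) :
    IsWildPoint n (f x) := by
  obtain ⟨φ, hφ_base, hφ_ess, hφ_lim⟩ := hx
  refine ⟨fun k => f.comp (φ k), fun k => by simp [hφ_base k],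
    fun k => (hφ_ess k).comp_of_homotopic_id hgf, ?_⟩
  simpa only [comp_const, Function.comp_def] using ((continuous_postcomp f).tendsto _).comp hφ_lim

theorem IsRigidAt.apply_eq_of_homotopic_id {h : C(X, X)}
    (hh : h.Homotopic (ContinuousMap.id X)) {x : X} (hx : IsRigidAt n x) : h x = x := by
  obtain ⟨φ, hφ_base, -, hφ_lim, hrigid⟩ := hx
  obtain ⟨K⟩ := hh.symm
  let L : C(X × unitInterval, X) := K.toContinuousMap.comp ⟨Prod.swap, continuous_swap⟩
  let β : C(unitInterval, X) := L.curry x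
  -- `Φ F` is the homotopy `(s, t) ↦ K (t, F s)` from `F` to `h ∘ F`.
  let Φ : C(Sph n, X) → C(Sph n × unitInterval, X) := fun F => (L.curry.comp F).uncurry
  have hΦ : Continuous Φ := continuous_uncurry.comp (continuous_postcomp _)
  have hΦ_const : Φ (const (Sph n) x) = β.comp (ContinuousMap.snd (α := Sph n)) := by
    ext ⟨s, t⟩; rfl
  have hβ_one : β 1 = h x := by simp [β, L]
  rw [← hβ_one]
  refine hrigid β (by simp [β, L]) (fun k => Φ (φ k)) (fun k s => by simp [Φ, L])
    (fun k t => by simp [Φ, β, hφ_base k]) ?_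
  simpa only [hΦ_const, Function.comp_def] using (hΦ.tendsto _).comp hφ_lim

end

theorem stmt15_general {X Y : Type*} [TopologicalSpace X] [TopologicalSpace Y]
    (n : ℕ)
    (hX : {x : X | IsRigidAt n x} = wildSet n X)
    (hY : {y : Y | IsRigidAt n y} = wildSet n Y)
    (f : C(X, Y)) (g : C(Y, X))
    (hgf : (g.comp f).Homotopic (ContinuousMap.id X))
    (hfg : (f.comp g).Homotopic (ContinuousMap.id Y)) :
    ∃ e : ↥(wildSet n X) ≃ₜ ↥(wildSet n Y),
      (∀ x : wildSet n X, (e x : Y) = f (x : X)) ∧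
      (∀ y : wildSet n Y, (e.symm y : X) = g (y : Y)) := by
  have hf : Set.MapsTo f (wildSet n X) (wildSet n Y) := fun _ hx => hx.map_of_homotopic_id hgf
  have hg : Set.MapsTo g (wildSet n Y) (wildSet n X) := fun _ hy => hy.map_of_homotopic_id hfg
  have hinv : Set.InvOn g f (wildSet n X) (wildSet n Y) :=
    ⟨fun x hx => IsRigidAt.apply_eq_of_homotopic_id hgf (hX.ge hx),
      fun y hy => IsRigidAt.apply_eq_of_homotopic_id hfg (hY.ge hy)⟩
  exact ⟨.ofInvOn f.continuous.continuousOn g.continuous.continuousOn hf hg hinv,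
    fun _ => rfl, fun _ => rfl⟩

/-- homotopy equivalent completely `π_n`-rigid spaces have
homeomorphic wild sets, via the restrictions of the homotopy inverses. -/
theorem stmt15 {X Y : Type*} [TopologicalSpace X] [TopologicalSpace Y]
    [T2Space X] [T2Space Y] (n : ℕ)
    (hX : {x : X | IsRigidAt n x} = wildSet n X)
    (hY : {y : Y | IsRigidAt n y} = wildSet n Y)
    (f : C(X, Y)) (g : C(Y, X))
    (hgf : (g.comp f).Homotopic (ContinuousMap.id X))
    (hfg : (f.comp g).Homotopic (ContinuousMap.id Y)) :
    ∃ e : ↥(wildSet n X) ≃ₜ ↥(wildSet n Y),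
      (∀ x : wildSet n X, (e x : Y) = f (x : X)) ∧
      (∀ y : wildSet n Y, (e.symm y : X) = g (y : Y)) :=
  stmt15_general n hX hY f g hgf hfg
end

section
/- Let d ≥ 1 and let X be a nonempty compact subset of ℝ^d. Then there exists a set Z with X ⊆ Z ⊆ ℝ^d such that Z, with the subspace topology inherited from ℝ^d, is a Peano continuum, and Z ∖ X is the union of a countable (possibly empty) pairwise-disjoint family of sets, each of which is an open line segment {(1−t)·a + t·b : t ∈ (0,1)} for some distinct points a, b ∈ ℝ^d. -/
open Filter Topology

/-!
Take finite `2⁻ⁿ`-nets `t n ⊆ X`, increasing in `n`, and add to `X` every segment between two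
points of `t n` at distance at most `8 • 2⁻ⁿ` (every segment between points of `t 0`). A segment
of level `n` stays within `8 • 2⁻ⁿ` of `X`, so away from `X` only finitely many segments matter:
the hull is closed, and off `X` it is locally a finite union of segments. A point `x ∈ X` is
joined to its approximation in `t n` by the polygonal chain through its approximations at all
finer levels, which stays within `2⁻ⁿ` of `x`; this gives connectedness and local connectedness
along `X`. Finally, removing from the `k`-th segment `X` and the earlier segments leaves an open
part of it, which splits into countably many disjoint open segments, the images of the components
of an open subset of `(0, 1)`.
-/

open Set Metric

section Topology

variable {α : Type*} [TopologicalSpace α] {F : Set α} {x y z : α}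

theorem mem_connectedComponentIn_trans (hy : y ∈ connectedComponentIn F x)
    (hz : z ∈ connectedComponentIn F y) : z ∈ connectedComponentIn F x :=
  connectedComponentIn_eq hy ▸ hz

theorem mem_connectedComponentIn_symm (hy : y ∈ connectedComponentIn F x) :
    x ∈ connectedComponentIn F y := by
  rw [← connectedComponentIn_eq hy]
  exact mem_connectedComponentIn (connectedComponentIn_nonempty_iff.1 ⟨y, hy⟩)

theorem Set.Finite.isClosed_sUnion {S : Set (Set α)} (hS : S.Finite) (h : ∀ s ∈ S, IsClosed s) :
    IsClosed (⋃₀ S) :=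
  sUnion_eq_biUnion (s := S) ▸ hS.isClosed_biUnion h

theorem IsOpen.eq_Ioo_csInf_csSup {β : Type*} [ConditionallyCompleteLinearOrder β]
    [TopologicalSpace β] [OrderTopology β] [DenselyOrdered β] [NoMinOrder β] [NoMaxOrder β]
    {s : Set β} (hs : IsOpen s) (hc : IsConnected s) (hb : BddBelow s) (ha : BddAbove s) :
    s = Ioo (sInf s) (sSup s) :=
  subset_antisymm
    (interior_Icc (α := β) ▸ hs.subset_interior_iff.2 (subset_Icc_csInf_csSup hb ha))
    (hc.Ioo_csInf_csSup_subset hb ha)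

theorem IsOpen.exists_countable_pairwise_disjoint_Ioo {O : Set ℝ} (hO : IsOpen O)
    (hb : Bornology.IsBounded O) :
    ∃ I : Set (Set ℝ), I.Countable ∧ I.Pairwise Disjoint ∧ ⋃₀ I = O ∧
      ∀ J ∈ I, ∃ a b, a < b ∧ J = Ioo a b := by
  have hdisj : (connectedComponentIn O '' O).Pairwise Disjoint := by
    rintro _ ⟨x, -, rfl⟩ _ ⟨y, -, rfl⟩ hne
    exact disjoint_left.2 fun z hzx hzy =>
      hne ((connectedComponentIn_eq hzx).trans (connectedComponentIn_eq hzy).symm)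
  refine ⟨_, PairwiseDisjoint.countable_of_isOpen (s := id) hdisj
    (fun _ ⟨x, _, hx⟩ => hx ▸ hO.connectedComponentIn)
    (fun _ ⟨x, hx, hxC⟩ => hxC ▸ ⟨x, mem_connectedComponentIn hx⟩), hdisj, ?_, ?_⟩
  · rw [sUnion_image]
    exact subset_antisymm (iUnion₂_subset fun x _ => connectedComponentIn_subset O x)
      fun x hx => mem_biUnion hx (mem_connectedComponentIn hx)
  · rintro _ ⟨x, hx, rfl⟩
    have hC := hb.subset (connectedComponentIn_subset O x)
    have hIoo := hO.connectedComponentIn.eq_Ioo_csInf_csSup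
      (isConnected_connectedComponentIn_iff.2 hx) hC.bddBelow hC.bddAbove
    exact ⟨_, _, nonempty_Ioo.1 (hIoo ▸ ⟨x, mem_connectedComponentIn hx⟩), hIoo⟩

end Topology

section Segments

variable {E : Type*} [AddCommGroup E] [Module ℝ E] [TopologicalSpace E] [IsTopologicalAddGroup E]
  [ContinuousSMul ℝ E]

theorem isCompact_segment (a b : E) : IsCompact (segment ℝ a b) := by
  rw [segment_eq_image_lineMap]
  exact isCompact_Icc.image AffineMap.lineMap_continuous

theorem mem_connectedComponentIn_of_tendsto {p : ℕ → E} {x : E} (hp : Tendsto p atTop (𝓝 x))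
    {F : Set E} (hx : x ∈ F) (hF : ∀ m, segment ℝ (p m) (p (m + 1)) ⊆ F) :
    p 0 ∈ connectedComponentIn F x := by
  set C := ⋃ m, segment ℝ (p m) (p (m + 1))
  have hC : IsPreconnected C := IsPreconnected.iUnion_of_chain
    (fun m => (convex_segment _ _).isPreconnected)
    fun m => ⟨p (m + 1), right_mem_segment ℝ _ _, left_mem_segment ℝ _ _⟩
  have hxC : x ∈ closure C := mem_closure_of_tendsto hp
    (Eventually.of_forall fun m => mem_iUnion.2 ⟨m, left_mem_segment ℝ _ _⟩)
  have hxC' : IsPreconnected (insert x C) :=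
    hC.subset_closure (subset_insert x C) (insert_subset hxC subset_closure)
  exact hxC'.subset_connectedComponentIn (mem_insert x C) (insert_subset hx (iUnion_subset hF))
    (mem_insert_of_mem x (mem_iUnion.2 ⟨0, left_mem_segment ℝ _ _⟩))

theorem exists_pairwise_disjoint_openSegment_eq_segment_inter {U : Set E} (hU : IsOpen U)
    {a b : E} (ha : a ∉ U) (hb : b ∉ U) :
    ∃ G : Set (Set E), G.Countable ∧ G.Pairwise Disjoint ∧ ⋃₀ G = segment ℝ a b ∩ U ∧
      ∀ S ∈ G, ∃ a' b', a' ≠ b' ∧ S = openSegment ℝ a' b' := by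
  rcases eq_or_ne a b with rfl | hab
  · exact ⟨∅, countable_empty, pairwise_empty _, by simp [ha], by simp⟩
  set φ := AffineMap.lineMap (k := ℝ) a b
  have hφ : Function.Injective φ := AffineMap.lineMap_injective ℝ hab
  have hO : IsOpen (Ioo 0 1 ∩ φ ⁻¹' U) :=
    isOpen_Ioo.inter (hU.preimage AffineMap.lineMap_continuous)
  obtain ⟨I, hIc, hId, hIU, hIoo⟩ := hO.exists_countable_pairwise_disjoint_Ioo
    ((Metric.isBounded_Ioo (0 : ℝ) 1).subset inter_subset_left)
  refine ⟨image φ '' I, hIc.image _, ?_, ?_, ?_⟩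
  · rintro _ ⟨J, hJ, rfl⟩ _ ⟨K, hK, rfl⟩ hne
    exact (disjoint_image_iff hφ).2 (hId hJ hK (ne_of_apply_ne _ hne))
  · rw [← image_sUnion, hIU, image_inter_preimage, ← openSegment_eq_image_lineMap,
      ← insert_endpoints_openSegment, insert_inter_of_notMem ha, insert_inter_of_notMem hb]
  · rintro _ ⟨J, hJ, rfl⟩
    obtain ⟨α, β, hαβ, rfl⟩ := hIoo J hJ
    exact ⟨φ α, φ β, hφ.ne hαβ.ne, by rw [← openSegment_eq_Ioo hαβ, image_openSegment]⟩

theorem exists_pairwise_disjoint_openSegment_eq_sUnion_diff [T2Space E] {X : Set E}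
    (hX : IsClosed X) {F : Set (Set E)} (hF : F.Countable)
    (hseg : ∀ S ∈ F, ∃ a ∈ X, ∃ b ∈ X, S = segment ℝ a b) :
    ∃ G : Set (Set E), G.Countable ∧ G.Pairwise Disjoint ∧ ⋃₀ G = ⋃₀ F \ X ∧
      ∀ S ∈ G, ∃ a b, a ≠ b ∧ S = openSegment ℝ a b := by
  rcases F.eq_empty_or_nonempty with rfl | hne
  · exact ⟨∅, countable_empty, pairwise_empty _, by simp, by simp⟩
  obtain ⟨e, rfl⟩ := hF.exists_eq_range hne
  have hpiece : ∀ k, ∃ G : Set (Set E), G.Countable ∧ G.Pairwise Disjoint ∧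
      ⋃₀ G = disjointed e k \ X ∧ ∀ S ∈ G, ∃ a b, a ≠ b ∧ S = openSegment ℝ a b := by
    intro k
    obtain ⟨a, ha, b, hb, hk⟩ := hseg _ (mem_range_self k)
    have hU : IsOpen ((⋂ j < k, (e j)ᶜ) ∩ Xᶜ) := by
      refine ((finite_lt_nat k).isOpen_biInter fun j _ => ?_).inter hX.isOpen_compl
      obtain ⟨a', -, b', -, hj⟩ := hseg _ (mem_range_self j)
      exact hj ▸ (isCompact_segment a' b').isClosed.isOpen_compl
    rw [disjointed_eq_inter_compl, hk, sdiff_eq, inter_assoc]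
    exact exists_pairwise_disjoint_openSegment_eq_segment_inter hU (fun h => h.2 ha)
      fun h => h.2 hb
  choose G hGc hGd hGU hGseg using hpiece
  refine ⟨⋃ k, G k, countable_iUnion hGc, ?_, ?_, ?_⟩
  · rintro S hS T hT hST
    obtain ⟨j, hj⟩ := mem_iUnion.1 hS
    obtain ⟨k, hk⟩ := mem_iUnion.1 hT
    rcases eq_or_ne j k with rfl | hjk
    · exact hGd j hj hk hST
    · exact ((disjoint_disjointed e hjk).mono sdiff_subset sdiff_subset).mono
        (hGU j ▸ subset_sUnion_of_mem hj) (hGU k ▸ subset_sUnion_of_mem hk)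
  · rw [sUnion_iUnion, sUnion_range, ← iUnion_disjointed (f := e), iUnion_sdiff]
    exact iUnion_congr hGU
  · intro S hS
    obtain ⟨k, hk⟩ := mem_iUnion.1 hS
    exact hGseg k S hk

end Segments

section Metric

variable {α : Type*} [PseudoMetricSpace α]

theorem locallyConnectedSpace_of_forall_exists_mem_connectedComponentIn {Z : Set α}
    (h : ∀ z ∈ Z, ∀ ε > 0, ∃ ρ > 0, ∀ w ∈ Z, dist w z < ρ →
      w ∈ connectedComponentIn (Z ∩ ball z ε) z) :
    LocallyConnectedSpace Z := by
  rw [locallyConnectedSpace_iff_connected_subsets]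
  rintro ⟨z, hz⟩ U hU
  obtain ⟨ε, hε, hεU⟩ := Metric.mem_nhds_iff.1 hU
  obtain ⟨ρ, hρ, hρC⟩ := h z hz ε hε
  have hC : connectedComponentIn (Z ∩ ball z ε) z ⊆ Z ∩ ball z ε :=
    connectedComponentIn_subset _ _
  refine ⟨Subtype.val ⁻¹' connectedComponentIn (Z ∩ ball z ε) z,
    mem_of_superset (ball_mem_nhds _ hρ) fun w hw => hρC w w.2 hw, ?_,
    fun w hw => hεU (hC hw).2⟩
  rw [← Topology.IsInducing.subtypeVal.isPreconnected_image, Subtype.image_preimage_coe,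
    inter_eq_right.2 (hC.trans inter_subset_left)]
  exact isPreconnected_connectedComponentIn

theorem IsClosed.union_sUnion_of_finite_not_subset_cthickening {X : Set α} {F : Set (Set α)}
    (hX : IsClosed X) (hF : ∀ S ∈ F, IsClosed S)
    (hfin : ∀ ε > 0, {S ∈ F | ¬ S ⊆ cthickening ε X}.Finite) : IsClosed (X ∪ ⋃₀ F) := by
  refine closure_subset_iff_isClosed.1 fun z hz => ?_
  by_contra hzF
  obtain ⟨δ, hδ, hzδ⟩ := exists_real_pos_lt_infEDist_of_notMem_closure
    (hX.closure_eq.symm ▸ fun h => hzF (Or.inl h) : z ∉ closure X)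
  replace hzδ : z ∉ cthickening δ X := hzδ.not_ge
  set G := {S ∈ F | ¬ S ⊆ cthickening δ X}
  have hG : IsClosed (cthickening δ X ∪ ⋃₀ G) :=
    isClosed_cthickening.union ((hfin δ hδ).isClosed_sUnion fun S hS => hF S hS.1)
  have hsub : X ∪ ⋃₀ F ⊆ cthickening δ X ∪ ⋃₀ G := by
    rintro w (hw | ⟨S, hS, hwS⟩)
    · exact Or.inl (self_subset_cthickening X hw)
    · by_cases hSδ : S ⊆ cthickening δ X
      · exact Or.inl (hSδ hwS)
      · exact Or.inr ⟨S, ⟨hS, hSδ⟩, hwS⟩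
  obtain hz' | ⟨S, hS, hzS⟩ := closure_minimal hsub hG hz
  · exact hzδ hz'
  · exact hzF (Or.inr ⟨S, hS.1, hzS⟩)

end Metric

theorem Convex.mem_connectedComponentIn_inter_ball {E : Type*} [SeminormedAddCommGroup E]
    [NormedSpace ℝ E] {S Z : Set E} (hS : Convex ℝ S) (hSZ : S ⊆ Z) {z w : E} (hz : z ∈ S)
    (hw : w ∈ S) {ε : ℝ} (hwz : dist w z < ε) : w ∈ connectedComponentIn (Z ∩ ball z ε) z :=
  (hS.inter (convex_ball z ε)).isPreconnected.subset_connectedComponentIn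
    ⟨hz, mem_ball_self (dist_nonneg.trans_lt hwz)⟩ (inter_subset_inter_left _ hSZ) ⟨hw, hwz⟩

namespace SegmentHull

noncomputable def rad (n : ℕ) : ℝ := 2⁻¹ ^ n

theorem rad_pos (n : ℕ) : 0 < rad n := by unfold rad; positivity

theorem rad_succ (n : ℕ) : rad (n + 1) = rad n / 2 := by
  rw [rad, rad, pow_succ, div_eq_mul_inv]

theorem rad_antitone : Antitone rad :=
  fun _ _ h => pow_le_pow_of_le_one (by norm_num) (by norm_num) h

theorem tendsto_rad : Tendsto rad atTop (𝓝 0) :=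
  tendsto_pow_atTop_nhds_zero_of_lt_one (by norm_num) (by norm_num)

theorem exists_rad_lt {ε : ℝ} (hε : 0 < ε) : ∃ n, rad n < ε :=
  (tendsto_rad.eventually (gt_mem_nhds hε)).exists

variable {E : Type*} [NormedAddCommGroup E] [NormedSpace ℝ E]

/-- The constant `8` leaves room both for the steps (`≤ 3 • 2⁻ⁿ`) of the chains of approximations
and for the bridges between points of `X` at distance `≤ 6 • 2⁻ⁿ`; at level `0` all pairs of net
points are joined, which makes the hull connected. -/
def edgesAt (t : ℕ → Set E) (n : ℕ) : Set (Set E) :=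
  {S | ∃ u ∈ t n, ∃ v ∈ t n, (n = 0 ∨ dist u v ≤ 8 * rad n) ∧ S = segment ℝ u v}

def edges (t : ℕ → Set E) : Set (Set E) := ⋃ n, edgesAt t n

theorem isClosed_of_mem_edgesAt {t : ℕ → Set E} {n : ℕ} {S : Set E} (hS : S ∈ edgesAt t n) :
    IsClosed S := by
  obtain ⟨u, -, v, -, -, rfl⟩ := hS
  exact (isCompact_segment u v).isClosed

theorem convex_of_mem_edgesAt {t : ℕ → Set E} {n : ℕ} {S : Set E} (hS : S ∈ edgesAt t n) :
    Convex ℝ S := by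
  obtain ⟨u, -, v, -, -, rfl⟩ := hS
  exact convex_segment u v

end SegmentHull

open SegmentHull

section DyadicNet

variable {α : Type*} [PseudoMetricSpace α]

structure IsDyadicNet (X : Set α) (t : ℕ → Set α) : Prop where
  finite : ∀ n, (t n).Finite
  subset : ∀ n, t n ⊆ X
  mono : Monotone t
  exists_dist_lt : ∀ n, ∀ x ∈ X, ∃ u ∈ t n, dist x u < rad n

theorem IsCompact.exists_isDyadicNet {X : Set α} (hX : IsCompact X) : ∃ t, IsDyadicNet X t := by
  choose s hsX hsfin hcover using fun n => hX.finite_cover_balls (rad_pos n)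
  refine ⟨accumulate s, fun n => ?_, fun n => ?_, monotone_accumulate, fun n x hx => ?_⟩
  · rw [accumulate_def]
    exact (finite_le_nat n).biUnion fun m _ => hsfin m
  · rw [accumulate_def]
    exact iUnion₂_subset fun m _ => hsX m
  · obtain ⟨u, hu, hxu⟩ := mem_iUnion₂.1 (hcover n hx)
    exact ⟨u, subset_accumulate hu, hxu⟩

end DyadicNet

variable {E : Type*} [NormedAddCommGroup E] [NormedSpace ℝ E]

def segmentHull (X : Set E) (t : ℕ → Set E) : Set E := X ∪ ⋃₀ edges t

theorem subset_segmentHull_of_mem_edgesAt {X : Set E} {t : ℕ → Set E} {n : ℕ} {S : Set E}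
    (hS : S ∈ edgesAt t n) : S ⊆ segmentHull X t :=
  fun _ hw => Or.inr ⟨S, mem_iUnion.2 ⟨n, hS⟩, hw⟩

namespace IsDyadicNet

variable {X : Set E} {t : ℕ → Set E}

theorem edgesAt_finite (ht : IsDyadicNet X t) (n : ℕ) : (edgesAt t n).Finite :=
  ((ht.finite n).image2 _ (ht.finite n)).subset fun _ ⟨_, hu, _, hv, _, hS⟩ =>
    hS ▸ mem_image2_of_mem (f := segment ℝ) hu hv

theorem edges_countable (ht : IsDyadicNet X t) : (edges t).Countable :=
  countable_iUnion fun n => (ht.edgesAt_finite n).countable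

theorem exists_eq_segment (ht : IsDyadicNet X t) {S : Set E} (hS : S ∈ edges t) :
    ∃ a ∈ X, ∃ b ∈ X, S = segment ℝ a b := by
  obtain ⟨n, u, hu, v, hv, -, rfl⟩ := mem_iUnion.1 hS
  exact ⟨u, ht.subset n hu, v, ht.subset n hv, rfl⟩

theorem exists_mem_subset_closedBall (ht : IsDyadicNet X t) {n : ℕ} (hn : n ≠ 0) {S : Set E}
    (hS : S ∈ edgesAt t n) :
    ∃ u ∈ X, u ∈ S ∧ S ⊆ closedBall u (8 * rad n) := by
  obtain ⟨u, hu, v, -, huv, rfl⟩ := hS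
  exact ⟨u, ht.subset n hu, left_mem_segment ℝ u v, (segment_subset_closedBall_left u v).trans
    (closedBall_subset_closedBall (huv.resolve_left hn))⟩

theorem isClosed_segmentHull (ht : IsDyadicNet X t) (hX : IsClosed X) :
    IsClosed (segmentHull X t) := by
  refine hX.union_sUnion_of_finite_not_subset_cthickening
    (fun S hS => (mem_iUnion.1 hS).elim fun _ => isClosed_of_mem_edgesAt) fun ε hε => ?_
  obtain ⟨N, hN⟩ := exists_rad_lt (by positivity : 0 < ε / 8)
  refine ((finite_le_nat N).biUnion fun m _ => ht.edgesAt_finite m).subset ?_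
  rintro S ⟨hS, hSε⟩
  obtain ⟨m, hm⟩ := mem_iUnion.1 hS
  refine mem_biUnion (not_lt.1 fun hNm : N < m => hSε ?_) hm
  obtain ⟨u, hu, -, hSu⟩ := ht.exists_mem_subset_closedBall (by omega) hm
  have : 8 * rad m ≤ ε := by linarith [rad_antitone hNm.le]
  exact hSu.trans ((closedBall_subset_closedBall this).trans (closedBall_subset_cthickening hu ε))

theorem segmentHull_subset_convexHull (ht : IsDyadicNet X t) :
    segmentHull X t ⊆ convexHull ℝ X := by
  refine union_subset (subset_convexHull ℝ X) (sUnion_subset fun S hS => ?_)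
  obtain ⟨a, ha, b, hb, rfl⟩ := ht.exists_eq_segment hS
  exact (convex_convexHull ℝ X).segment_subset (subset_convexHull ℝ X ha)
    (subset_convexHull ℝ X hb)

theorem isCompact_segmentHull [ProperSpace E] (ht : IsDyadicNet X t) (hX : IsCompact X) :
    IsCompact (segmentHull X t) :=
  isCompact_of_isClosed_isBounded (ht.isClosed_segmentHull hX.isClosed)
    ((isBounded_convexHull.2 hX.isBounded).subset ht.segmentHull_subset_convexHull)

/-- The polygonal chain through the approximations of `x` at all levels `≥ n`. -/
theorem exists_mem_connectedComponentIn (ht : IsDyadicNet X t) {x : E} (hx : x ∈ X) (n : ℕ) :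
    ∃ u ∈ t n, dist x u < rad n ∧
      u ∈ connectedComponentIn (segmentHull X t ∩ closedBall x (rad n)) x := by
  choose f hft hfx using fun k => ht.exists_dist_lt k x hx
  refine ⟨f n, hft n, hfx n, ?_⟩
  have hf : Tendsto f atTop (𝓝 x) :=
    tendsto_iff_dist_tendsto_zero.2 <| squeeze_zero (fun _ => dist_nonneg)
      (fun k => (dist_comm (f k) x).trans_le (hfx k).le) tendsto_rad
  have hfn : ∀ m, f (n + m) ∈ closedBall x (rad n) := fun m =>
    mem_closedBall'.2 ((hfx _).le.trans (rad_antitone (Nat.le_add_right n m)))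
  refine mem_connectedComponentIn_of_tendsto (p := fun m => f (n + m))
    (hf.comp ((tendsto_add_atTop_nat n).congr fun m => Nat.add_comm m n))
    ⟨Or.inl hx, mem_closedBall_self (rad_pos n).le⟩ fun m => subset_inter ?_
      ((convex_closedBall x (rad n)).segment_subset (hfn m) (hfn (m + 1)))
  refine subset_segmentHull_of_mem_edgesAt (n := n + m + 1)
    ⟨_, ht.mono (Nat.le_succ _) (hft _), _, hft _, Or.inr ?_, rfl⟩
  have := dist_triangle_left (f (n + m)) (f (n + m + 1)) x
  have := hfx (n + m)
  have := hfx (n + m + 1)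
  have := rad_succ (n + m)
  linarith [rad_pos (n + m)]

theorem mem_connectedComponentIn_of_dist_le (ht : IsDyadicNet X t) {x y : E} (hx : x ∈ X)
    (hy : y ∈ X) {n : ℕ} (hxy : n = 0 ∨ dist x y ≤ 6 * rad n) :
    y ∈ connectedComponentIn (segmentHull X t ∩ closedBall x (dist x y + rad n)) x := by
  obtain ⟨u, hu, hxu, hux⟩ := ht.exists_mem_connectedComponentIn hx n
  obtain ⟨v, hv, hyv, hvy⟩ := ht.exists_mem_connectedComponentIn hy n
  have hxball : closedBall x (rad n) ⊆ closedBall x (dist x y + rad n) :=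
    closedBall_subset_closedBall (by linarith [dist_nonneg (x := x) (y := y)])
  have hyball : closedBall y (rad n) ⊆ closedBall x (dist x y + rad n) :=
    closedBall_subset_closedBall' (by rw [dist_comm]; linarith)
  have huv : segment ℝ u v ∈ edgesAt t n := by
    refine ⟨u, hu, v, hv, hxy.imp_right fun h => ?_, rfl⟩
    linarith [dist_triangle4 u x y v, dist_comm u x]
  have hseg : segment ℝ u v ⊆ segmentHull X t ∩ closedBall x (dist x y + rad n) :=
    subset_inter (subset_segmentHull_of_mem_edgesAt huv) ((convex_closedBall _ _).segment_subset
      (hxball (mem_closedBall'.2 hxu.le)) (hyball (mem_closedBall'.2 hyv.le)))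
  have hvu := (convex_segment u v).isPreconnected.subset_connectedComponentIn
    (left_mem_segment ℝ u v) hseg (right_mem_segment ℝ u v)
  have hyv := mem_connectedComponentIn_symm
    (connectedComponentIn_mono _ (inter_subset_inter_right _ hyball) hvy)
  exact mem_connectedComponentIn_trans
    (connectedComponentIn_mono _ (inter_subset_inter_right _ hxball) hux)
    (mem_connectedComponentIn_trans hvu hyv)

theorem isConnected_segmentHull (ht : IsDyadicNet X t) (hne : X.Nonempty) :
    IsConnected (segmentHull X t) := by
  obtain ⟨x₀, hx₀⟩ := hne
  have hX : ∀ y ∈ X, y ∈ connectedComponentIn (segmentHull X t) x₀ := fun y hy =>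
    connectedComponentIn_mono _ inter_subset_left
      (ht.mem_connectedComponentIn_of_dist_le hx₀ hy (Or.inl rfl))
  refine ⟨⟨x₀, Or.inl hx₀⟩, isPreconnected_of_forall x₀ fun w hw =>
    ⟨_, connectedComponentIn_subset _ _, mem_connectedComponentIn (Or.inl hx₀), ?_,
      isPreconnected_connectedComponentIn⟩⟩
  obtain hwX | ⟨S, hS, hwS⟩ := hw
  · exact hX w hwX
  obtain ⟨m, hm⟩ := mem_iUnion.1 hS
  obtain ⟨u, hu, v, hv, huv, rfl⟩ := id hm
  exact mem_connectedComponentIn_trans (hX u (ht.subset m hu))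
    ((convex_segment u v).isPreconnected.subset_connectedComponentIn (left_mem_segment ℝ u v)
      (subset_segmentHull_of_mem_edgesAt hm) hwS)

/-- The segments of level `≤ N` that miss `z` are finitely many closed sets, so they avoid a ball
around `z`; a segment of level `> N` lies within `4 • 2⁻ᴺ` of its endpoint in `X`. -/
theorem exists_forall_convex_or_mem_connectedComponentIn (ht : IsDyadicNet X t) (z : E)
    (N : ℕ) : ∃ ρ > 0, ∀ w ∈ segmentHull X t, dist w z < ρ →
      (∃ S ⊆ segmentHull X t, Convex ℝ S ∧ z ∈ S ∧ w ∈ S) ∨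
      ∃ u ∈ X, w ∈ connectedComponentIn (segmentHull X t ∩ closedBall u (4 * rad N)) u := by
  have hB : IsClosed (⋃₀ {S ∈ ⋃ m ≤ N, edgesAt t m | z ∉ S}) := by
    refine (((finite_le_nat N).biUnion fun m _ => ht.edgesAt_finite m).subset (sep_subset _ _)
      ).isClosed_sUnion fun S ⟨hS, _⟩ => ?_
    obtain ⟨m, -, hm⟩ := mem_iUnion₂.1 hS
    exact isClosed_of_mem_edgesAt hm
  obtain ⟨ρ, hρ, hρB⟩ := Metric.isOpen_iff.1 hB.isOpen_compl z fun ⟨S, hS, hzS⟩ => hS.2 hzS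
  refine ⟨ρ, hρ, ?_⟩
  rintro w (hwX | ⟨S, hS, hwS⟩) hwz
  · have : 0 ≤ 4 * rad N := by linarith [rad_pos N]
    exact Or.inr ⟨w, hwX, mem_connectedComponentIn ⟨Or.inl hwX, mem_closedBall_self this⟩⟩
  obtain ⟨m, hm⟩ := mem_iUnion.1 hS
  have hSconv := convex_of_mem_edgesAt hm
  rcases le_or_gt m N with hmN | hNm
  · refine Or.inl ⟨S, subset_segmentHull_of_mem_edgesAt hm, hSconv, by_contra fun hzS => ?_, hwS⟩
    exact hρB (mem_ball.2 hwz) ⟨S, ⟨mem_biUnion hmN hm, hzS⟩, hwS⟩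
  · obtain ⟨u, hu, huS, hSu⟩ := ht.exists_mem_subset_closedBall (by omega) hm
    have : 8 * rad m ≤ 4 * rad N := by linarith [rad_antitone hNm, rad_succ N]
    exact Or.inr ⟨u, hu, hSconv.isPreconnected.subset_connectedComponentIn huS
      (subset_inter (subset_segmentHull_of_mem_edgesAt hm)
        (hSu.trans (closedBall_subset_closedBall this))) hwS⟩

theorem exists_forall_mem_connectedComponentIn_of_mem (ht : IsDyadicNet X t) {z : E}
    (hz : z ∈ X) {ε : ℝ} (hε : 0 < ε) : ∃ ρ > 0, ∀ w ∈ segmentHull X t, dist w z < ρ →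
      w ∈ connectedComponentIn (segmentHull X t ∩ ball z ε) z := by
  obtain ⟨N, hN⟩ := exists_rad_lt (by positivity : 0 < ε / 9)
  obtain ⟨ρ, hρ, hnear⟩ := ht.exists_forall_convex_or_mem_connectedComponentIn z N
  refine ⟨min ρ (min ε (rad N)), by positivity [rad_pos N], fun w hw hwz => ?_⟩
  obtain ⟨hwρ, hwε, hwN⟩ := lt_min_iff.1 hwz |>.imp_right lt_min_iff.1
  obtain ⟨S, hSZ, hS, hzS, hwS⟩ | ⟨u, hu, hwu⟩ := hnear w hw hwρ
  · exact hS.mem_connectedComponentIn_inter_ball hSZ hzS hwS hwε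
  have hwu' : dist w u ≤ 4 * rad N := (connectedComponentIn_subset _ _ hwu).2
  have hzu : dist z u ≤ 6 * rad N := by
    linarith [dist_triangle z w u, dist_comm w z, rad_pos N]
  refine mem_connectedComponentIn_trans (connectedComponentIn_mono _ (inter_subset_inter_right _
    (closedBall_subset_ball ?_)) (ht.mem_connectedComponentIn_of_dist_le hz hu (Or.inr hzu)))
    (connectedComponentIn_mono _ (inter_subset_inter_right _ (closedBall_subset_ball' ?_)) hwu)
  · linarith
  · linarith [dist_triangle u w z, dist_comm u w]

theorem exists_forall_mem_connectedComponentIn_of_notMem (ht : IsDyadicNet X t)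
    (hX : IsClosed X) {z : E} (hz : z ∉ X) {ε : ℝ} (hε : 0 < ε) :
    ∃ ρ > 0, ∀ w ∈ segmentHull X t, dist w z < ρ →
      w ∈ connectedComponentIn (segmentHull X t ∩ ball z ε) z := by
  obtain ⟨δ, hδ, hzδ⟩ := Metric.isOpen_iff.1 hX.isOpen_compl z hz
  obtain ⟨N, hN⟩ := exists_rad_lt (by positivity : 0 < δ / 8)
  obtain ⟨ρ, hρ, hnear⟩ := ht.exists_forall_convex_or_mem_connectedComponentIn z N
  refine ⟨min ρ (min ε (δ / 2)), by positivity, fun w hw hwz => ?_⟩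
  obtain ⟨hwρ, hwε, hwδ⟩ := lt_min_iff.1 hwz |>.imp_right lt_min_iff.1
  obtain ⟨S, hSZ, hS, hzS, hwS⟩ | ⟨u, hu, hwu⟩ := hnear w hw hwρ
  · exact hS.mem_connectedComponentIn_inter_ball hSZ hzS hwS hwε
  have hwu' : dist w u ≤ 4 * rad N := (connectedComponentIn_subset _ _ hwu).2
  exact absurd hu (hzδ (mem_ball.2 (by linarith [dist_triangle u w z, dist_comm u w])))

theorem locallyConnectedSpace_segmentHull (ht : IsDyadicNet X t) (hX : IsClosed X) :
    LocallyConnectedSpace (segmentHull X t) :=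
  locallyConnectedSpace_of_forall_exists_mem_connectedComponentIn fun z _ _ hε => by
    by_cases hz : z ∈ X
    · exact ht.exists_forall_mem_connectedComponentIn_of_mem hz hε
    · exact ht.exists_forall_mem_connectedComponentIn_of_notMem hX hz hε

end IsDyadicNet

theorem stmt18_general (d : ℕ) (X : Set (EuclideanSpace ℝ (Fin d)))
    (hne : X.Nonempty) (hcomp : IsCompact X) :
    ∃ Z : Set (EuclideanSpace ℝ (Fin d)), X ⊆ Z ∧
      IsCompact Z ∧ IsConnected Z ∧ LocallyConnectedSpace ↥Z ∧
      ∃ fam : Set (Set (EuclideanSpace ℝ (Fin d))), fam.Countable ∧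
        Z \ X = ⋃₀ fam ∧ fam.Pairwise Disjoint ∧
        ∀ S ∈ fam, ∃ a b : EuclideanSpace ℝ (Fin d), a ≠ b ∧
          S = (fun t : ℝ => (1 - t) • a + t • b) '' Set.Ioo (0 : ℝ) 1 := by
  obtain ⟨t, ht⟩ := hcomp.exists_isDyadicNet
  obtain ⟨G, hGc, hGd, hGU, hGseg⟩ := exists_pairwise_disjoint_openSegment_eq_sUnion_diff
    hcomp.isClosed ht.edges_countable fun S hS => ht.exists_eq_segment hS
  refine ⟨segmentHull X t, subset_union_left, ht.isCompact_segmentHull hcomp,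
    ht.isConnected_segmentHull hne, ht.locallyConnectedSpace_segmentHull hcomp.isClosed,
    G, hGc, by rw [segmentHull, union_sdiff_left, hGU], hGd, fun S hS => ?_⟩
  obtain ⟨a, b, hab, rfl⟩ := hGseg S hS
  exact ⟨a, b, hab, openSegment_eq_image ℝ a b⟩

/-- every nonempty compact subset of `ℝ^d` is contained in a Peano
continuum `Z ⊆ ℝ^d` such that `Z ∖ X` is a countable disjoint union of open
line segments. -/
theorem stmt18 (d : ℕ) (hd : 1 ≤ d) (X : Set (EuclideanSpace ℝ (Fin d)))
    (hne : X.Nonempty) (hcomp : IsCompact X) :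
    ∃ Z : Set (EuclideanSpace ℝ (Fin d)), X ⊆ Z ∧
      IsCompact Z ∧ IsConnected Z ∧ LocallyConnectedSpace ↥Z ∧
      ∃ fam : Set (Set (EuclideanSpace ℝ (Fin d))), fam.Countable ∧
        Z \ X = ⋃₀ fam ∧ fam.Pairwise Disjoint ∧
        ∀ S ∈ fam, ∃ a b : EuclideanSpace ℝ (Fin d), a ≠ b ∧
          S = (fun t : ℝ => (1 - t) • a + t • b) '' Set.Ioo (0 : ℝ) 1 :=
  stmt18_general d X hne hcomp
end
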